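/- arXiv:0908.1590 — 2 statements merged into one kernel-verified Lean document; each statement's English description precedes it below -/
import Mathlib

section
/- Let A be a commutative Banach algebra whose linear span of a set S of elements is dense in A, where each p ∈ S satisfies p*p = c_p • p with c_p ≠ 0, and distinct elements of S are orthogonal (p*q = 0 for p ≠ q in S). Then every continuous derivation D : A → A* (with A* the dual bimodule) vanishes, i.e. A is weakly amenable. -/
/-- A continuous linear map vanishing on a set with dense span is zero. -/
lemma clm_eq_zero_of_dense_span
    {A B : Type*} [NormedAddCommGroup A] [NormedSpace ℂ A]
    [NormedAddCommGroup B] [NormedSpace ℂ B]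
    (S : Set A)
    (hdense : Dense ((Submodule.span ℂ S : Submodule ℂ A) : Set A))
    (f : A →L[ℂ] B) (h : ∀ s ∈ S, f s = 0) : f = 0 := by
  have hsub : S ⊆ (LinearMap.ker (f : A →ₗ[ℂ] B) : Set A) := fun s hs => h s hs
  have hspan : (Submodule.span ℂ S : Submodule ℂ A) ≤ LinearMap.ker (f : A →ₗ[ℂ] B) :=
    Submodule.span_le.2 hsub
  have heq : (f : A → B) = (fun _ => 0) := by
    apply Continuous.ext_on hdense f.continuous continuous_const
    intro x hx
    exact hspan hx
  ext x
  exact congrFun heq x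

/-- A commutative Banach algebra with dense span of mutually orthogonal scalar-idempotents
is weakly amenable: every continuous derivation into the dual bimodule vanishes. -/
theorem stmt1
    {A : Type*} [NormedCommRing A] [NormedAlgebra ℂ A]
    (S : Set A) (c : A → ℂ)
    (hidem : ∀ p ∈ S, p * p = c p • p)
    (hc : ∀ p ∈ S, c p ≠ 0)
    (horth : ∀ p ∈ S, ∀ q ∈ S, p ≠ q → p * q = 0)
    (hdense : Dense ((Submodule.span ℂ S : Submodule ℂ A) : Set A))
    (D : A →L[ℂ] (A →L[ℂ] ℂ))
    (hderiv : ∀ a b x : A, D (a * b) x = D b (x * a) + D a (b * x)) :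
    D = 0 := by
  have key : ∀ p ∈ S, ∀ q ∈ S, D p q = 0 := by
    intro p hp q hq
    have h1 : D (p * p) q = D p (q * p) + D p (p * q) := hderiv p p q
    have h2 : D (p * p) q = c p * D p q := by
      rw [hidem p hp, map_smul]
      rfl
    by_cases hpq : p = q
    · subst hpq
      have h3 : D p (p * p) = c p * D p p := by
        rw [hidem p hp, map_smul, smul_eq_mul]
      rw [h2, h3] at h1
      have : c p * D p p = 0 := by linear_combination -h1
      exact (mul_eq_zero.1 this).resolve_left (hc p hp)
    · have hz : p * q = 0 := horth p hp q hq hpq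
      have hz' : q * p = 0 := by rw [mul_comm]; exact hz
      have : c p * D p q = 0 := by
        rw [← h2, h1, hz, hz', map_zero]
        simp
      exact (mul_eq_zero.1 this).resolve_left (hc p hp)
  have hDp : ∀ p ∈ S, D p = 0 := by
    intro p hp
    exact clm_eq_zero_of_dense_span S hdense (D p) (fun q hq => key p hp q hq)
  exact clm_eq_zero_of_dense_span S hdense D hDp
end

section
/- Let A be a commutative Banach algebra with dense span of mutually orthogonal scalar-idempotents {α_m}_{m∈I} (α_m * α_m = c_m • α_m, c_m ≠ 0). For each m, the set I_m = {f ∈ A : f * α_j = 0 for all j ≠ m} equals ℂ · α_m. In particular every minimal closed ideal of A is one-dimensional and of this form. -/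
/-- Lemma 1.8(i),(iii) abstracted: with a dense span of mutually orthogonal
scalar-idempotents `α m`, the set `I_m = {f | f * α j = 0 ∀ j ≠ m}` is exactly
the one-dimensional space `ℂ • α m`. -/
theorem stmt9
    {A : Type*} [NormedCommRing A] [NormedAlgebra ℂ A]
    (α : ℕ → A) (c : ℕ → ℂ)
    (hidem : ∀ i, α i * α i = c i • α i)
    (hc : ∀ i, c i ≠ 0)
    (horth : ∀ i j, i ≠ j → α i * α j = 0)
    (hdense : Dense ((Submodule.span ℂ (Set.range α) : Submodule ℂ A) : Set A))
    (m : ℕ) :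
    {f : A | ∀ j, j ≠ m → f * α j = 0}
      = ((Submodule.span ℂ {α m} : Submodule ℂ A) : Set A) := by
  -- an element annihilating all α j is zero
  have hann : ∀ g : A, (∀ j, g * α j = 0) → g = 0 := by
    intro g hg
    have h1 : ∀ x ∈ Submodule.span ℂ (Set.range α), g * x = 0 := by
      intro x hx
      induction hx using Submodule.span_induction with
      | mem x hx => obtain ⟨j, rfl⟩ := hx; exact hg j
      | zero => exact mul_zero g
      | add x y _ _ hx hy => rw [mul_add, hx, hy, add_zero]
      | smul a x _ hx => rw [mul_smul_comm, hx, smul_zero]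
    have hcl : IsClosed {y : A | g * y = 0} :=
      isClosed_eq (continuous_const.mul continuous_id) continuous_const
    have h2 : ∀ x : A, g * x = 0 := by
      intro x
      exact hcl.closure_subset_iff.2 (fun y hy => h1 y hy) (hdense x)
    simpa using h2 1
  have hclosed : IsClosed ((Submodule.span ℂ {α m} : Submodule ℂ A) : Set A) :=
    (Submodule.span ℂ {α m}).closed_of_finiteDimensional
  ext f
  simp only [Set.mem_setOf_eq, SetLike.mem_coe]
  constructor
  · intro hf
    -- first: f * α m ∈ span {α m}
    have hmem : f * α m ∈ Submodule.span ℂ ({α m} : Set A) := by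
      set V : Submodule ℂ A :=
        (Submodule.span ℂ ({α m} : Set A)).comap (LinearMap.mulRight ℂ (α m)) with hV
      have hVclosed : IsClosed (V : Set A) :=
        hclosed.preimage (continuous_mul_right (α m))
      have hspan : (Submodule.span ℂ (Set.range α) : Set A) ⊆ (V : Set A) := by
        intro x hx
        refine Submodule.span_le.2 ?_ hx
        rintro _ ⟨j, rfl⟩
        simp only [hV, Submodule.mem_comap, LinearMap.mulRight_apply, SetLike.mem_coe]
        by_cases hj : j = m
        · subst hj
          rw [hidem j]
          exact Submodule.smul_mem _ _ (Submodule.mem_span_singleton_self _)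
        · rw [horth j m hj]
          exact Submodule.zero_mem _
      have : f ∈ (V : Set A) :=
        hVclosed.closure_subset_iff.2 hspan (hdense f)
      simpa [hV, Submodule.mem_comap] using this
    obtain ⟨μ, hμ⟩ := Submodule.mem_span_singleton.1 hmem
    set ν := μ / c m with hν
    have hg : ∀ j, (f - ν • α m) * α j = 0 := by
      intro j
      by_cases hj : j = m
      · subst hj
        rw [sub_mul, smul_mul_assoc, hidem j, hμ.symm, smul_smul, hν,
          div_mul_cancel₀ _ (hc j), sub_self]
      · rw [sub_mul, hf j hj, smul_mul_assoc, horth m j (Ne.symm hj), smul_zero, sub_self]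
    have := hann _ hg
    have hf' : f = ν • α m := by
      have := sub_eq_zero.1 this
      exact this
    rw [hf']
    exact Submodule.smul_mem _ _ (Submodule.mem_span_singleton_self _)
  · intro hf j hj
    obtain ⟨a, rfl⟩ := Submodule.mem_span_singleton.1 hf
    rw [smul_mul_assoc, horth m j (Ne.symm hj), smul_zero]
end
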